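/- Assume q is odd and let n ≥ 1. For all a, c₀, c₁, …, c_n ∈ k^×, with the convention t_n := 1, Σ_{z∈k^×} Σ_{(t₁,…,t_{n−1})∈(k^×)^{n−1}} ω₀(z) · ψ( Σ_{i=1}^{n−1} (t_i/t_{i+1})·c_i + c_n·z^{−1} + z·a·c₀·t₁^{−2} ) = ω₀(a·c₀) · Kl_α^{n+1}(ψ; (2,…,2,1,1), (𝟙,…,𝟙,ω₀)), where α := a·c₁²⋯c_{n−1}²·c_n·c₀, the weight vector (2,…,2,1,1) has n−1 entries equal to 2 followed by two entries equal to 1, and the character vector consists of n trivial characters followed by ω₀. (This finite-field identity is the computation underlying the twisted character values of θ-stable simple supercuspidal representations of GL_{2n} at affine generic elements.) -/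

import Mathlib

/-!
Substitute `xᵢ = cᵢ tᵢ / tᵢ₊₁` for `i < n` (with `tₙ = 1`), `xₙ = cₙ / z` and
`xₙ₊₁ = z a c₀ / t₁²`. The first `n - 1` of these are successive quotients, which are inverted by
tail products, so `(z, t) ↦ x` is a bijection onto the solutions of `x₁² ⋯ xₙ₋₁² xₙ xₙ₊₁ = α`
(the last coordinate being determined by the others), and it turns the argument of `ψ` into
`x₁ + ⋯ + xₙ₊₁`. Since `ω₀² = 1`, the twist matches too:
`ω₀(a c₀) ω₀(xₙ₊₁) = ω₀(z · (a c₀ / t₁)²) = ω₀(z)`.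
-/

open scoped BigOperators

/-- The Kloosterman sum `Kl_u^{r}(ψ; (k₁,…,k_r), (χ₁,…,χ_r))` attached to a finite field `k`,
a nontrivial additive character `ψ` of `k`, weights `w` and multiplicative characters `χs`:
the sum of `ψ(x₁+⋯+x_r)·χ₁(x₁)⋯χ_r(x_r)` over all `(x₁,…,x_r) ∈ (k^×)^r`
with `x₁^{k₁}⋯x_r^{k_r} = u`. -/
noncomputable def Kl {k : Type*} [Field k] [Fintype k] [DecidableEq k]
    (ψ : AddChar k ℂ) {r : ℕ} (w : Fin r → ℕ) (χs : Fin r → MulChar k ℂ) (u : kˣ) : ℂ :=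
  ∑ x : Fin r → kˣ,
    if ∏ i, x i ^ w i = u then ψ (∑ i, ((x i : k))) * ∏ i, χs i ((x i : k)) else 0

open Finset

section Telescoping

variable {G : Type*} {m : ℕ}

def extendOne [One G] (t : Fin m → G) (j : ℕ) : G := if h : j < m then t ⟨j, h⟩ else 1

lemma extendOne_of_lt [One G] (t : Fin m → G) {j : ℕ} (h : j < m) :
    extendOne t j = t ⟨j, h⟩ :=
  dif_pos h

lemma extendOne_of_le [One G] (t : Fin m → G) {j : ℕ} (h : m ≤ j) : extendOne t j = 1 :=
  dif_neg h.not_gt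

lemma val_extendOne {M : Type*} [Monoid M] (t : Fin m → Mˣ) (j : ℕ) :
    ((extendOne t j : Mˣ) : M) = if h : j < m then (t ⟨j, h⟩ : M) else 1 := by
  unfold extendOne
  split_ifs <;> rfl

variable [CommGroup G]

def successiveQuotients (t : Fin m → G) (i : Fin m) : G := extendOne t i / extendOne t (i + 1)

def tailProd (y : Fin m → G) (j : ℕ) : G := ∏ l ∈ Ico j m, extendOne y l

lemma extendOne_tailProd (y : Fin m → G) (j : ℕ) :
    extendOne (fun i : Fin m ↦ tailProd y i) j = tailProd y j := by
  rcases lt_or_ge j m with h | h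
  · exact extendOne_of_lt _ h
  · rw [extendOne_of_le _ h, tailProd, Ico_eq_empty_of_le h, prod_empty]

lemma tailProd_successiveQuotients (t : Fin m → G) {j : ℕ} (hj : j ≤ m) :
    tailProd (successiveQuotients t) j = extendOne t j := by
  have hquot : ∀ l ∈ Ico j m, extendOne (successiveQuotients t) l =
      (extendOne t (l + 1))⁻¹ / (extendOne t l)⁻¹ := fun l hl ↦ by
    rw [extendOne_of_lt _ (mem_Ico.1 hl).2, successiveQuotients, inv_div_inv]
  rw [tailProd, prod_congr rfl hquot, prod_Ico_div (f := fun l ↦ (extendOne t l)⁻¹) hj,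
    extendOne_of_le t le_rfl, inv_one, one_div, inv_inv]

lemma prod_successiveQuotients (t : Fin m → G) :
    ∏ i, successiveQuotients t i = extendOne t 0 := by
  rw [← tailProd_successiveQuotients t (Nat.zero_le m), tailProd, ← range_eq_Ico,
    ← Fin.prod_univ_eq_prod_range]
  exact prod_congr rfl fun i _ ↦ (extendOne_of_lt _ i.isLt).symm

@[simps apply]
def successiveQuotientsEquiv : (Fin m → G) ≃ (Fin m → G) where
  toFun := successiveQuotients
  invFun y i := tailProd y i
  left_inv t := funext fun i ↦
    (tailProd_successiveQuotients t i.isLt.le).trans (extendOne_of_lt t i.isLt)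
  right_inv y := funext fun i ↦ by
    rw [successiveQuotients, extendOne_tailProd, extendOne_tailProd, tailProd, tailProd,
      ← prod_Ico_div_bot _ i.isLt, extendOne_of_lt y i.isLt, div_div_cancel]

end Telescoping

lemma sum_fun_fin_succ_eq_sum_snoc {α M : Type*} [Fintype α] [AddCommMonoid M] {r : ℕ}
    (f : (Fin (r + 1) → α) → M) : ∑ x, f x = ∑ y : Fin r → α, ∑ v, f (Fin.snoc y v) := by
  rw [← (Fin.snocEquiv fun _ ↦ α).sum_comp, Fintype.sum_prod_type_right]
  rfl

lemma MulChar.apply_sq_mul_of_sq_eq_one {R R' : Type*} [CommMonoid R] [CommRing R']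
    {χ : MulChar R R'} (hχ : χ ^ 2 = 1) (u v : Rˣ) : χ ((u ^ 2 * v : Rˣ) : R) = χ v := by
  rw [Units.val_mul, map_mul, Units.val_pow_eq_pow_val, map_pow, ← MulChar.pow_apply_coe, hχ,
    MulChar.one_apply_coe, one_mul]

section Kloosterman

variable {k : Type*} [Field k] [Fintype k] [DecidableEq k]

lemma Kl_eq_sum_of_weight_last_eq_one (ψ : AddChar k ℂ) {r : ℕ} (w : Fin (r + 1) → ℕ)
    (hw : w (Fin.last r) = 1) (χs : Fin (r + 1) → MulChar k ℂ) (u : kˣ) :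
    Kl ψ w χs u = ∑ y : Fin r → kˣ,
      ψ (∑ i, (y i : k) + ((u / ∏ i, y i ^ w i.castSucc : kˣ) : k)) *
        (∏ i, χs i.castSucc (y i)) *
          χs (Fin.last r) ((u / ∏ i, y i ^ w i.castSucc : kˣ) : k) := by
  rw [Kl, sum_fun_fin_succ_eq_sum_snoc]
  refine sum_congr rfl fun y _ ↦ ?_
  simp only [Fin.prod_univ_castSucc, Fin.sum_univ_castSucc, Fin.snoc_castSucc, Fin.snoc_last, hw,
    pow_one, ← eq_div_iff_mul_eq'', mul_assoc]
  rw [sum_ite_eq', if_pos (mem_univ _)]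

lemma Kl_two_one_one_eq_sum (ψ : AddChar k ℂ) (ω : MulChar k ℂ) (m : ℕ) (α : kˣ) :
    Kl ψ (fun i : Fin (m + 2) ↦ if (i : ℕ) < m then 2 else 1)
        (fun i ↦ if (i : ℕ) < m + 1 then 1 else ω) α =
      ∑ y : Fin m → kˣ, ∑ s : kˣ,
        ψ (∑ i, (y i : k) + s + ((α / ((∏ i, y i ^ 2) * s) : kˣ) : k)) *
          ω ((α / ((∏ i, y i ^ 2) * s) : kˣ) : k) := by
  rw [Kl_eq_sum_of_weight_last_eq_one _ _ (by simp), sum_fun_fin_succ_eq_sum_snoc]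
  refine sum_congr rfl fun y _ ↦ sum_congr rfl fun s _ ↦ ?_
  simp [Fin.prod_univ_castSucc, Fin.sum_univ_castSucc]

theorem twisted_sum_eq_mul_Kl (ψ : AddChar k ℂ) (ω : MulChar k ℂ) (hω : ω ^ 2 = 1) (m : ℕ)
    (a c0 cn : kˣ) (c : Fin m → kˣ) :
    ∑ z : kˣ, ∑ t : Fin m → kˣ, ω (z : k) *
        ψ ((∑ i : Fin m,
              ((t i : k) / (if h : i.1 + 1 < m then (t ⟨i.1 + 1, h⟩ : k) else 1)) * (c i : k))
            + (cn : k) / (z : k)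
            + (z : k) * (a : k) * (c0 : k) / (if h : 0 < m then (t ⟨0, h⟩ : k) else 1) ^ 2) =
      ω ((a : k) * (c0 : k)) *
        Kl ψ (fun i : Fin (m + 2) ↦ if (i : ℕ) < m then 2 else 1)
          (fun i ↦ if (i : ℕ) < m + 1 then 1 else ω) (a * (∏ i, c i ^ 2) * cn * c0) := by
  rw [Kl_two_one_one_eq_sum, mul_sum, sum_comm]
  conv_rhs => rw [← (successiveQuotientsEquiv.trans (Equiv.mulLeft c)).sum_comp]
  refine sum_congr rfl fun t _ ↦ ?_
  conv_rhs => rw [mul_sum, ← (Equiv.divLeft cn).sum_comp]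
  refine sum_congr rfl fun z _ ↦ ?_
  simp only [Equiv.trans_apply, Equiv.coe_mulLeft, Pi.mul_apply, Equiv.divLeft_apply,
    successiveQuotientsEquiv_apply]
  have hlast : a * (∏ i, c i ^ 2) * cn * c0 /
      ((∏ i, (c i * successiveQuotients t i) ^ 2) * (cn / z)) =
        z * a * c0 / extendOne t 0 ^ 2 := by
    rw [prod_pow, prod_pow, prod_mul_distrib, prod_successiveQuotients]
    generalize ∏ i, c i = P
    rw [← Units.val_inj]
    push_cast
    field_simp
  have hsq : a * c0 * (z * a * c0 / extendOne t 0 ^ 2) = (a * c0 / extendOne t 0) ^ 2 * z := by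
    rw [← Units.val_inj]
    push_cast
    field_simp
  have htwist : ω ((a : k) * (c0 : k)) * ω ((z * a * c0 / extendOne t 0 ^ 2 : kˣ) : k) =
      ω (z : k) := by
    rw [← Units.val_mul a c0, ← map_mul, ← Units.val_mul, hsq,
      MulChar.apply_sq_mul_of_sq_eq_one hω]
  have hsum : ∑ i, ((c i * successiveQuotients t i : kˣ) : k) =
      ∑ i : Fin m,
        ((t i : k) / (if h : i.1 + 1 < m then (t ⟨i.1 + 1, h⟩ : k) else 1)) * (c i : k) :=
    sum_congr rfl fun i _ ↦ by
      rw [successiveQuotients, Units.val_mul, Units.val_div_eq_div_val, val_extendOne,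
        val_extendOne, dif_pos i.isLt]
      ring
  rw [hlast, ← htwist, hsum, ← val_extendOne]
  push_cast
  ring

end Kloosterman

/-- **Twisted character values of `θ`-stable simple supercuspidal representations of `GL_{2n}`
at affine generic elements, as a finite-field identity.** For `q` odd, `n ≥ 1` and
`a, c₀, c₁, …, cₙ ∈ k^×` (here `c i` denotes `c_{i+1}`), with the convention `tₙ := 1`,
`Σ_{z∈k^×} Σ_{t₁,…,t_{n−1}∈k^×} ω₀(z)·ψ( Σ_{i=1}^{n−1}(tᵢ/t_{i+1})·cᵢ + cₙ·z^{−1}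
    + z·a·c₀·t₁^{−2} )
  = ω₀(a·c₀)·Kl_α^{n+1}(ψ; (2,…,2,1,1), (𝟙,…,𝟙,ω₀))`
with `α = a·c₁²⋯c_{n−1}²·cₙ·c₀`. -/
theorem twisted_char_simple_supercuspidal_GL {k : Type*} [Field k] [Fintype k] [DecidableEq k]
    (ψ : AddChar k ℂ)
    (ω₀ : MulChar k ℂ) (hω₂ : ω₀ ^ 2 = 1)
    (n : ℕ) (hn : 1 ≤ n)
    (a c0 : kˣ) (c : Fin n → kˣ) :
    ∑ z : kˣ, ∑ t : Fin (n - 1) → kˣ,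
      ω₀ (z : k) *
        ψ ((∑ i : Fin (n - 1),
              ((t i : k) /
                  (if hlt : i.1 + 1 < n - 1 then (t ⟨i.1 + 1, hlt⟩ : k) else 1))
                * (c ⟨i.1, by have := i.isLt; omega⟩ : k))
            + (c ⟨n - 1, by omega⟩ : k) / (z : k)
            + (z : k) * (a : k) * (c0 : k) /
                (if hlt : (0 : ℕ) < n - 1 then (t ⟨0, hlt⟩ : k) else 1) ^ 2)
    = ω₀ ((a : k) * (c0 : k)) *
        Kl ψ (fun i : Fin (n + 1) => if (i : ℕ) < n - 1 then 2 else 1)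
          (fun i : Fin (n + 1) => if (i : ℕ) < n then 1 else ω₀)
          (a * (∏ i : Fin (n - 1), c ⟨i.1, by have := i.isLt; omega⟩ ^ 2)
            * c ⟨n - 1, by omega⟩ * c0) := by
  obtain ⟨m, rfl⟩ : ∃ m, n = m + 1 := ⟨n - 1, by omega⟩
  exact twisted_sum_eq_mul_Kl ψ ω₀ hω₂ m a c0 (c (Fin.last m)) fun i ↦ c i.castSucc
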